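/- arXiv:1706.06175 — 4 statements merged into one kernel-verified Lean document; each statement's English description precedes it below -/
import Mathlib

section
/- Let E, B ∈ ℝ³ satisfy the null conditions E·B = 0 and |E| = |B|, with W := (|E|²+|B|²)/2 ≠ 0 and V := (E×B)/W. Then for all indices i, j ∈ {1,2,3}: W δ_{ij} − E_i E_j − B_i B_j = W V_i V_j, i.e. the Maxwell stress tensor of a null field equals that of a pressureless fluid with density W and velocity V. -/
noncomputable section

abbrev V3 := Fin 3 → ℝ
abbrev C3 := Fin 3 → ℂ
abbrev P4 := ℝ × V3

def e3 (i : Fin 3) : V3 := Pi.single i 1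

def dot3 (a b : V3) : ℝ := a 0 * b 0 + a 1 * b 1 + a 2 * b 2

def cross3 (a b : V3) : V3 :=
  ![a 1 * b 2 - a 2 * b 1, a 2 * b 0 - a 0 * b 2, a 0 * b 1 - a 1 * b 0]

def pd (i : Fin 3) (f : V3 → ℝ) (x : V3) : ℝ := fderiv ℝ f x (e3 i)

def grad3 (f : V3 → ℝ) (x : V3) : V3 := fun i => pd i f x

def div3 (F : V3 → V3) (x : V3) : ℝ :=
  pd 0 (fun y => F y 0) x + pd 1 (fun y => F y 1) x + pd 2 (fun y => F y 2) x

def curl3 (F : V3 → V3) (x : V3) : V3 :=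
  ![pd 1 (fun y => F y 2) x - pd 2 (fun y => F y 1) x,
    pd 2 (fun y => F y 0) x - pd 0 (fun y => F y 2) x,
    pd 0 (fun y => F y 1) x - pd 1 (fun y => F y 0) x]

/-- (X·∇)Y at a point: components Σ_j X_j ∂_j Y_i. -/
def dirDeriv (X : V3) (Y : V3 → V3) (x : V3) : V3 :=
  fun i => dot3 X (grad3 (fun y => Y y i) x)

def cdot3 (a b : C3) : ℂ := a 0 * b 0 + a 1 * b 1 + a 2 * b 2

def ccross3 (a b : C3) : C3 :=
  ![a 1 * b 2 - a 2 * b 1, a 2 * b 0 - a 0 * b 2, a 0 * b 1 - a 1 * b 0]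

def pdC (i : Fin 3) (f : V3 → ℂ) (x : V3) : ℂ := fderiv ℝ f x (e3 i)

def gradC (f : V3 → ℂ) (x : V3) : C3 := fun i => pdC i f x

def divC (F : V3 → C3) (x : V3) : ℂ :=
  pdC 0 (fun y => F y 0) x + pdC 1 (fun y => F y 1) x + pdC 2 (fun y => F y 2) x

def curlC (F : V3 → C3) (x : V3) : C3 :=
  ![pdC 1 (fun y => F y 2) x - pdC 2 (fun y => F y 1) x,
    pdC 2 (fun y => F y 0) x - pdC 0 (fun y => F y 2) x,
    pdC 0 (fun y => F y 1) x - pdC 1 (fun y => F y 0) x]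

/-- time derivative of a scalar on ℝ × ℝ³ -/
def pdt (f : P4 → ℝ) (p : P4) : ℝ := fderiv ℝ f p (1, 0)

/-- time derivative of a vector field on ℝ × ℝ³, componentwise -/
def pdtV (F : P4 → V3) (p : P4) : V3 := fun i => pdt (fun q => F q i) p

def pdtC (f : P4 → ℂ) (p : P4) : ℂ := fderiv ℝ f p (1, 0)

lemma cross3_mul_cross3 (a b : V3) (i j : Fin 3) :
    cross3 a b i * cross3 a b j =
      (dot3 a a * dot3 b b - dot3 a b ^ 2) * (if i = j then 1 else 0)
        - dot3 b b * (a i * a j) - dot3 a a * (b i * b j)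
        + dot3 a b * (a i * b j + a j * b i) := by
  fin_cases i <;> fin_cases j <;>
    simp only [dot3, cross3, Fin.isValue, Matrix.cons_val, Fin.reduceFinMk, if_true, if_false,
      Fin.reduceEq, mul_one, mul_zero] <;> ring

lemma cross3_mul_cross3_of_null {a b : V3} (hab : dot3 a b = 0) (hmag : dot3 a a = dot3 b b)
    (i j : Fin 3) :
    cross3 a b i * cross3 a b j =
      dot3 a a * (dot3 a a * (if i = j then 1 else 0) - a i * a j - b i * b j) := by
  rw [cross3_mul_cross3, hab, ← hmag]
  ring

/-- Maxwell stress tensor of a null field is that of a pressureless fluid. -/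
theorem stmt3 (E B : V3)
    (hEB : dot3 E B = 0) (hmag : dot3 E E = dot3 B B)
    (W : ℝ) (hW : W = (dot3 E E + dot3 B B) / 2) (hW0 : W ≠ 0)
    (V : V3) (hV : V = (1 / W) • cross3 E B) :
    ∀ i j : Fin 3,
      W * (if i = j then (1 : ℝ) else 0) - E i * E j - B i * B j = W * V i * V j := by
  intro i j
  have hWE : W = dot3 E E := by rw [hW, ← hmag]; ring
  have hstress := cross3_mul_cross3_of_null hEB hmag i j
  rw [← hWE] at hstress
  rw [hV]
  simp only [Pi.smul_apply, smul_eq_mul]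
  field_simp
  linear_combination -hstress
end
end

section
/- Let E, B : ℝ × ℝ³ → ℝ³ be smooth solutions of the vacuum Maxwell equations that satisfy the null conditions E·B = 0 and |E| = |B| at every point of space-time, with W := (|E|²+|B|²)/2 nowhere vanishing, and V := (E×B)/W. Then ∂_t B = ∇×(V×B) and ∂_t E = ∇×(V×E) pointwise. -/
noncomputable section

lemma cross_VB (E B : V3) (h1 : dot3 E B = 0) (W : ℝ) (hWB : W = dot3 B B)
    (hW0 : W ≠ 0) : cross3 ((1/W) • cross3 E B) B = -E := by
  subst hWB
  have h0 : dot3 B B ≠ 0 := hW0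
  unfold dot3 at h0 h1
  simp only [← pow_two] at h0
  funext i
  fin_cases i <;>
    simp only [cross3, dot3, Pi.smul_apply, smul_eq_mul, Pi.neg_apply,
      Matrix.cons_val_zero, Matrix.cons_val_one, Matrix.head_cons,
      Matrix.cons_val_two, Matrix.tail_cons, Fin.isValue, Fin.reduceFinMk] <;>
    field_simp <;>
    [linear_combination (B 0) * h1; linear_combination (B 1) * h1;
     linear_combination (B 2) * h1]

lemma cross_VE (E B : V3) (h1 : dot3 E B = 0) (W : ℝ) (hWE : W = dot3 E E)
    (hW0 : W ≠ 0) : cross3 ((1/W) • cross3 E B) E = B := by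
  subst hWE
  have h0 : dot3 E E ≠ 0 := hW0
  unfold dot3 at h0 h1
  simp only [← pow_two] at h0
  funext i
  fin_cases i <;>
    simp only [cross3, dot3, Pi.smul_apply, smul_eq_mul, Pi.neg_apply,
      Matrix.cons_val_zero, Matrix.cons_val_one, Matrix.head_cons,
      Matrix.cons_val_two, Matrix.tail_cons, Fin.isValue, Fin.reduceFinMk] <;>
    field_simp <;>
    [linear_combination (-(E 0)) * h1; linear_combination (-(E 1)) * h1;
     linear_combination (-(E 2)) * h1]

lemma curl3_neg (F : V3 → V3) (x : V3) :
    curl3 (fun y => -F y) x = -curl3 F x := by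
  funext i
  have h : ∀ (j : Fin 3) (k : Fin 3), pd j (fun y => -(F y k)) x = -pd j (fun y => F y k) x := by
    intro j k
    simp only [pd]
    rw [fderiv_fun_neg]
    simp
  fin_cases i <;> simp [curl3, h] <;> ring

/-- flux-transport form of Maxwell's equations for null fields. -/
theorem stmt5 (E B : P4 → V3)
    (hE : ContDiff ℝ (⊤ : ℕ∞) E) (hB : ContDiff ℝ (⊤ : ℕ∞) B)
    (hME : ∀ p : P4, pdtV E p = curl3 (fun y => B (p.1, y)) p.2)
    (hMB : ∀ p : P4, pdtV B p = -curl3 (fun y => E (p.1, y)) p.2)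
    (hdE : ∀ p : P4, div3 (fun y => E (p.1, y)) p.2 = 0)
    (hdB : ∀ p : P4, div3 (fun y => B (p.1, y)) p.2 = 0)
    (hnull1 : ∀ p : P4, dot3 (E p) (B p) = 0)
    (hnull2 : ∀ p : P4, dot3 (E p) (E p) = dot3 (B p) (B p))
    (W : P4 → ℝ) (hW : ∀ p, W p = (dot3 (E p) (E p) + dot3 (B p) (B p)) / 2)
    (hW0 : ∀ p, W p ≠ 0)
    (V : P4 → V3) (hV : ∀ p, V p = (1 / W p) • cross3 (E p) (B p)) :
    ∀ p : P4,
      pdtV B p = curl3 (fun y => cross3 (V (p.1, y)) (B (p.1, y))) p.2 ∧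
      pdtV E p = curl3 (fun y => cross3 (V (p.1, y)) (E (p.1, y))) p.2 := by
  intro p
  have hWB : ∀ q : P4, W q = dot3 (B q) (B q) := fun q => by
    have := hnull2 q; rw [hW q]; linarith
  have hWE : ∀ q : P4, W q = dot3 (E q) (E q) := fun q => by
    have := hnull2 q; rw [hW q]; linarith
  have hVB : ∀ q : P4, cross3 (V q) (B q) = -E q := fun q => by
    rw [hV q]; exact cross_VB (E q) (B q) (hnull1 q) (W q) (hWB q) (hW0 q)
  have hVE : ∀ q : P4, cross3 (V q) (E q) = B q := fun q => by
    rw [hV q]; exact cross_VE (E q) (B q) (hnull1 q) (W q) (hWE q) (hW0 q)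
  constructor
  · have : (fun y => cross3 (V (p.1, y)) (B (p.1, y))) = fun y => -E (p.1, y) := by
      funext y; exact hVB (p.1, y)
    rw [this, curl3_neg, hMB p]
  · have : (fun y => cross3 (V (p.1, y)) (E (p.1, y))) = fun y => B (p.1, y) := by
      funext y; exact hVE (p.1, y)
    rw [this, hME p]
end
end

section
/- Let E, B : ℝ³ → ℝ³ be smooth with E·B = 0 and |E|² = |B|² everywhere, and define V := (E×B)/W with W := (|E|²+|B|²)/2 nowhere zero. Then E·∇×E − B·∇×B = 0 and E·∇×B + B·∇×E = 0 at every point if and only if the conformal foliation conditions V·[(E·∇)B + (B·∇)E] = 0 and V·[(E·∇)E − (B·∇)B] = 0 hold at every point. -/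
noncomputable section

lemma pd_add (f g : V3 → ℝ) (x : V3) (hf : DifferentiableAt ℝ f x)
    (hg : DifferentiableAt ℝ g x) (i : Fin 3) :
    pd i (fun y => f y + g y) x = pd i f x + pd i g x := by
  simp only [pd, fderiv_fun_add hf hg, ContinuousLinearMap.add_apply]

lemma pd_sub (f g : V3 → ℝ) (x : V3) (hf : DifferentiableAt ℝ f x)
    (hg : DifferentiableAt ℝ g x) (i : Fin 3) :
    pd i (fun y => f y - g y) x = pd i f x - pd i g x := by
  simp only [pd, fderiv_fun_sub hf hg, ContinuousLinearMap.sub_apply]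

lemma pd_mul (f g : V3 → ℝ) (x : V3) (hf : DifferentiableAt ℝ f x)
    (hg : DifferentiableAt ℝ g x) (i : Fin 3) :
    pd i (fun y => f y * g y) x = f x * pd i g x + g x * pd i f x := by
  simp only [pd, fderiv_fun_mul hf hg, ContinuousLinearMap.add_apply,
    ContinuousLinearMap.smul_apply, smul_eq_mul]

lemma pd_dot3 (F G : V3 → V3) (hF : Differentiable ℝ F) (hG : Differentiable ℝ G)
    (i : Fin 3) (x : V3) :
    pd i (fun y => dot3 (F y) (G y)) x =
      F x 0 * pd i (fun y => G y 0) x + G x 0 * pd i (fun y => F y 0) x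
      + (F x 1 * pd i (fun y => G y 1) x + G x 1 * pd i (fun y => F y 1) x)
      + (F x 2 * pd i (fun y => G y 2) x + G x 2 * pd i (fun y => F y 2) x) := by
  have hFk : ∀ k, DifferentiableAt ℝ (fun y => F y k) x := fun k =>
    (differentiable_pi.mp hF k) x
  have hGk : ∀ k, DifferentiableAt ℝ (fun y => G y k) x := fun k =>
    (differentiable_pi.mp hG k) x
  simp only [dot3]
  rw [pd_add _ _ _ (((hFk 0).fun_mul (hGk 0)).fun_add ((hFk 1).fun_mul (hGk 1))) ((hFk 2).fun_mul (hGk 2)),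
    pd_add _ _ _ ((hFk 0).fun_mul (hGk 0)) ((hFk 1).fun_mul (hGk 1)),
    pd_mul _ _ _ (hFk 0) (hGk 0), pd_mul _ _ _ (hFk 1) (hGk 1),
    pd_mul _ _ _ (hFk 2) (hGk 2)]

lemma alg1 (e0 e1 e2 b0 b1 b2 w p00 p01 p02 p10 p11 p12 p20 p21 p22 q00 q01 q02 q10 q11 q12 q20 q21 q22 : ℝ)
    (heb : e0*b0 + e1*b1 + e2*b2 = 0)
    (hee : e0*e0 + e1*e1 + e2*e2 = w) (hbb : b0*b0 + b1*b1 + b2*b2 = w)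
    (hC0 : p00*b0 + e0*q00 + p10*b1 + e1*q10 + p20*b2 + e2*q20 = 0) (hC1 : p01*b0 + e0*q01 + p11*b1 + e1*q11 + p21*b2 + e2*q21 = 0) (hC2 : p02*b0 + e0*q02 + p12*b1 + e1*q12 + p22*b2 + e2*q22 = 0) :
    (e1*b2 - e2*b1)*(q00*e0 + q01*e1 + q02*e2 + (p00*b0 + p01*b1 + p02*b2))
      + (e2*b0 - e0*b2)*(q10*e0 + q11*e1 + q12*e2 + (p10*b0 + p11*b1 + p12*b2))
      + (e0*b1 - e1*b0)*(q20*e0 + q21*e1 + q22*e2 + (p20*b0 + p21*b1 + p22*b2))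
    = w * ((e0*((p21 - p12)) + e1*((p02 - p20)) + e2*((p10 - p01))) - (b0*((q21 - q12)) + b1*((q02 - q20)) + b2*((q10 - q01)))) := by
  linear_combination (e1*b2 - e2*b1)*hC0 + (e2*b0 - e0*b2)*hC1 + (e0*b1 - e1*b0)*hC2 - (b0*((q21 - q12)) + b1*((q02 - q20)) + b2*((q10 - q01)))*hee + (e0*((p21 - p12)) + e1*((p02 - p20)) + e2*((p10 - p01)))*hbb + ((e0*((q21 - q12)) + e1*((q02 - q20)) + e2*((q10 - q01))) - (b0*((p21 - p12)) + b1*((p02 - p20)) + b2*((p10 - p01))))*heb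

lemma alg2 (e0 e1 e2 b0 b1 b2 w p00 p01 p02 p10 p11 p12 p20 p21 p22 q00 q01 q02 q10 q11 q12 q20 q21 q22 : ℝ)
    (heb : e0*b0 + e1*b1 + e2*b2 = 0)
    (hee : e0*e0 + e1*e1 + e2*e2 = w) (hbb : b0*b0 + b1*b1 + b2*b2 = w)
    (hC0 : e0*p00 + e1*p10 + e2*p20 + - b0*q00 + - b1*q10 + - b2*q20 = 0) (hC1 : e0*p01 + e1*p11 + e2*p21 + - b0*q01 + - b1*q11 + - b2*q21 = 0) (hC2 : e0*p02 + e1*p12 + e2*p22 + - b0*q02 + - b1*q12 + - b2*q22 = 0) :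
    (e1*b2 - e2*b1)*((p00*e0 + p01*e1 + p02*e2) - (q00*b0 + q01*b1 + q02*b2))
      + (e2*b0 - e0*b2)*((p10*e0 + p11*e1 + p12*e2) - (q10*b0 + q11*b1 + q12*b2))
      + (e0*b1 - e1*b0)*((p20*e0 + p21*e1 + p22*e2) - (q20*b0 + q21*b1 + q22*b2))
    = -(w * ((e0*((q21 - q12)) + e1*((q02 - q20)) + e2*((q10 - q01))) + (b0*((p21 - p12)) + b1*((p02 - p20)) + b2*((p10 - p01))))) := by
  linear_combination (e1*b2 - e2*b1)*hC0 + (e2*b0 - e0*b2)*hC1 + (e0*b1 - e1*b0)*hC2 - (b0*((p21 - p12)) + b1*((p02 - p20)) + b2*((p10 - p01)))*hee - (e0*((q21 - q12)) + e1*((q02 - q20)) + e2*((q10 - q01)))*hbb + ((e0*((p21 - p12)) + e1*((p02 - p20)) + e2*((p10 - p01))) + (b0*((q21 - q12)) + b1*((q02 - q20)) + b2*((q10 - q01))))*heb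

/-- equivalence of the shear-free condition and the
conformal-foliation conditions. -/
theorem stmt13 (E B : V3 → V3)
    (hE : ContDiff ℝ (⊤ : ℕ∞) E) (hB : ContDiff ℝ (⊤ : ℕ∞) B)
    (hnull1 : ∀ x, dot3 (E x) (B x) = 0)
    (hnull2 : ∀ x, dot3 (E x) (E x) = dot3 (B x) (B x))
    (W : V3 → ℝ) (hW : ∀ x, W x = (dot3 (E x) (E x) + dot3 (B x) (B x)) / 2)
    (hW0 : ∀ x, W x ≠ 0)
    (V : V3 → V3) (hV : ∀ x, V x = (1 / W x) • cross3 (E x) (B x)) :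
    (∀ x, dot3 (E x) (curl3 E x) - dot3 (B x) (curl3 B x) = 0 ∧
          dot3 (E x) (curl3 B x) + dot3 (B x) (curl3 E x) = 0) ↔
    (∀ x, dot3 (V x) (dirDeriv (E x) B x + dirDeriv (B x) E x) = 0 ∧
          dot3 (V x) (dirDeriv (E x) E x - dirDeriv (B x) B x) = 0) := by
  have hEd : Differentiable ℝ E := hE.differentiable (by simp)
  have hBd : Differentiable ℝ B := hB.differentiable (by simp)
  -- the differentiated null constraints
  have hC1 : ∀ (x : V3) (l : Fin 3),
      pd l (fun y => E y 0) x * B x 0 + E x 0 * pd l (fun y => B y 0) x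
      + pd l (fun y => E y 1) x * B x 1 + E x 1 * pd l (fun y => B y 1) x
      + pd l (fun y => E y 2) x * B x 2 + E x 2 * pd l (fun y => B y 2) x = 0 := by
    intro x l
    have h := pd_dot3 E B hEd hBd l x
    have h0 : pd l (fun y => dot3 (E y) (B y)) x = 0 := by
      rw [show (fun y => dot3 (E y) (B y)) = fun _ => (0 : ℝ) from funext hnull1]
      simp [pd]
    rw [h0] at h
    linarith
  have hC2 : ∀ (x : V3) (l : Fin 3),
      E x 0 * pd l (fun y => E y 0) x + E x 1 * pd l (fun y => E y 1) x
      + E x 2 * pd l (fun y => E y 2) x + - (B x 0) * pd l (fun y => B y 0) x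
      + - (B x 1) * pd l (fun y => B y 1) x + - (B x 2) * pd l (fun y => B y 2) x = 0 := by
    intro x l
    have hdEE : Differentiable ℝ (fun y => dot3 (E y) (E y)) := by
      simp only [dot3]; fun_prop
    have hdBB : Differentiable ℝ (fun y => dot3 (B y) (B y)) := by
      simp only [dot3]; fun_prop
    have h := pd_sub _ _ x (hdEE x) (hdBB x) l
    have h0 : pd l (fun y => dot3 (E y) (E y) - dot3 (B y) (B y)) x = 0 := by
      rw [show (fun y => dot3 (E y) (E y) - dot3 (B y) (B y)) = fun _ => (0 : ℝ) from
        funext fun y => by rw [hnull2 y]; ring]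
      simp [pd]
    rw [h0] at h
    have hEE := pd_dot3 E E hEd hEd l x
    have hBB := pd_dot3 B B hBd hBd l x
    rw [hEE, hBB] at h
    linarith
  have key1 : ∀ x, dot3 (V x) (dirDeriv (E x) B x + dirDeriv (B x) E x)
      = dot3 (E x) (curl3 E x) - dot3 (B x) (curl3 B x) := by
    intro x
    have heb : E x 0 * B x 0 + E x 1 * B x 1 + E x 2 * B x 2 = 0 := hnull1 x
    have hee : E x 0 * E x 0 + E x 1 * E x 1 + E x 2 * E x 2 = W x := by
      have := hnull2 x
      simp only [dot3] at this
      rw [hW x]; simp only [dot3]; linarith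
    have hbb : B x 0 * B x 0 + B x 1 * B x 1 + B x 2 * B x 2 = W x := by
      have := hnull2 x
      simp only [dot3] at this
      rw [hW x]; simp only [dot3]; linarith
    have halg := alg1 (E x 0) (E x 1) (E x 2) (B x 0) (B x 1) (B x 2) (W x)
      (pd 0 (fun y => E y 0) x) (pd 1 (fun y => E y 0) x) (pd 2 (fun y => E y 0) x)
      (pd 0 (fun y => E y 1) x) (pd 1 (fun y => E y 1) x) (pd 2 (fun y => E y 1) x)
      (pd 0 (fun y => E y 2) x) (pd 1 (fun y => E y 2) x) (pd 2 (fun y => E y 2) x)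
      (pd 0 (fun y => B y 0) x) (pd 1 (fun y => B y 0) x) (pd 2 (fun y => B y 0) x)
      (pd 0 (fun y => B y 1) x) (pd 1 (fun y => B y 1) x) (pd 2 (fun y => B y 1) x)
      (pd 0 (fun y => B y 2) x) (pd 1 (fun y => B y 2) x) (pd 2 (fun y => B y 2) x)
      heb hee hbb (hC1 x 0) (hC1 x 1) (hC1 x 2)
    rw [hV x]
    simp only [dot3, cross3, dirDeriv, grad3, curl3, Pi.add_apply, Pi.smul_apply,
      smul_eq_mul, Matrix.cons_val_zero, Matrix.cons_val_one, Matrix.head_cons,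
      Matrix.cons_val_two, Matrix.tail_cons]
    field_simp [hW0 x]
    linear_combination halg
  have key2 : ∀ x, dot3 (V x) (dirDeriv (E x) E x - dirDeriv (B x) B x)
      = -(dot3 (E x) (curl3 B x) + dot3 (B x) (curl3 E x)) := by
    intro x
    have heb : E x 0 * B x 0 + E x 1 * B x 1 + E x 2 * B x 2 = 0 := hnull1 x
    have hee : E x 0 * E x 0 + E x 1 * E x 1 + E x 2 * E x 2 = W x := by
      have := hnull2 x
      simp only [dot3] at this
      rw [hW x]; simp only [dot3]; linarith
    have hbb : B x 0 * B x 0 + B x 1 * B x 1 + B x 2 * B x 2 = W x := by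
      have := hnull2 x
      simp only [dot3] at this
      rw [hW x]; simp only [dot3]; linarith
    have halg := alg2 (E x 0) (E x 1) (E x 2) (B x 0) (B x 1) (B x 2) (W x)
      (pd 0 (fun y => E y 0) x) (pd 1 (fun y => E y 0) x) (pd 2 (fun y => E y 0) x)
      (pd 0 (fun y => E y 1) x) (pd 1 (fun y => E y 1) x) (pd 2 (fun y => E y 1) x)
      (pd 0 (fun y => E y 2) x) (pd 1 (fun y => E y 2) x) (pd 2 (fun y => E y 2) x)
      (pd 0 (fun y => B y 0) x) (pd 1 (fun y => B y 0) x) (pd 2 (fun y => B y 0) x)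
      (pd 0 (fun y => B y 1) x) (pd 1 (fun y => B y 1) x) (pd 2 (fun y => B y 1) x)
      (pd 0 (fun y => B y 2) x) (pd 1 (fun y => B y 2) x) (pd 2 (fun y => B y 2) x)
      heb hee hbb (hC2 x 0) (hC2 x 1) (hC2 x 2)
    rw [hV x]
    simp only [dot3, cross3, dirDeriv, grad3, curl3, Pi.sub_apply, Pi.smul_apply,
      smul_eq_mul, Matrix.cons_val_zero, Matrix.cons_val_one, Matrix.head_cons,
      Matrix.cons_val_two, Matrix.tail_cons]
    field_simp [hW0 x]
    linear_combination halg
  constructor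
  · intro h x
    obtain ⟨h1, h2⟩ := h x
    refine ⟨?_, ?_⟩
    · rw [key1 x]; exact h1
    · rw [key2 x]; linarith
  · intro h x
    obtain ⟨h1, h2⟩ := h x
    rw [key1 x] at h1
    rw [key2 x] at h2
    exact ⟨h1, by linarith⟩
end
end

section
/- Let α, β : ℝ³ → ℂ be smooth and nowhere zero, write α = r_α e^{iθ_α}, β = r_β e^{iθ_β} with smooth r_α, r_β > 0 and smooth phases, and set E := Re{∇α×∇β}, B := Im{∇α×∇β}. If ∇r_α × ∇r_β = 0 everywhere, then E·∇(Im{αβ}) = 0 and B·∇(Re{αβ}) = 0 everywhere; i.e. Im{αβ} is a first integral of the electric field lines and Re{αβ} of the magnetic field lines. -/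
noncomputable section

lemma pdC_polar (r θ : V3 → ℝ) (hr : Differentiable ℝ r) (hθ : Differentiable ℝ θ)
    (x : V3) (i : Fin 3) :
    pdC i (fun y => (r y : ℂ) * Complex.exp (Complex.I * θ y)) x
      = ((pd i r x : ℂ) + Complex.I * r x * pd i θ x) * Complex.exp (Complex.I * θ x) := by
  have h1 : HasFDerivAt (fun y : V3 => ((r y : ℝ) : ℂ))
      (Complex.ofRealCLM.comp (fderiv ℝ r x)) x :=
    Complex.ofRealCLM.hasFDerivAt.comp x (hr x).hasFDerivAt
  have h2 : HasFDerivAt (fun y : V3 => Complex.I * ((θ y : ℝ) : ℂ))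
      (Complex.I • (Complex.ofRealCLM.comp (fderiv ℝ θ x))) x :=
    (Complex.ofRealCLM.hasFDerivAt.comp x (hθ x).hasFDerivAt).const_mul Complex.I
  have h3 := (((Complex.hasDerivAt_exp (Complex.I * θ x)).hasFDerivAt).restrictScalars ℝ).comp x h2
  have h4 := h1.mul h3
  have h5 := h4.fderiv
  simp only [Function.comp_def, Pi.mul_def] at h5
  unfold pdC pd
  rw [h5]
  simp [smul_eq_mul]
  ring

lemma pdC_mul (f g : V3 → ℂ) (x : V3) (hf : DifferentiableAt ℝ f x)
    (hg : DifferentiableAt ℝ g x) (i : Fin 3) :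
    pdC i (fun y => f y * g y) x = pdC i f x * g x + f x * pdC i g x := by
  have h := (hf.hasFDerivAt.mul hg.hasFDerivAt).fderiv
  simp only [Pi.mul_def] at h
  unfold pdC
  rw [h]
  simp [smul_eq_mul]
  ring

lemma pd_im (f : V3 → ℂ) (x : V3) (hf : DifferentiableAt ℝ f x) (i : Fin 3) :
    pd i (fun y => (f y).im) x = (pdC i f x).im := by
  have h := (Complex.imCLM.hasFDerivAt.comp x hf.hasFDerivAt).fderiv
  unfold pd pdC
  simp only [Function.comp_def, Complex.imCLM_apply] at h
  rw [h]
  simp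

lemma pd_re (f : V3 → ℂ) (x : V3) (hf : DifferentiableAt ℝ f x) (i : Fin 3) :
    pd i (fun y => (f y).re) x = (pdC i f x).re := by
  have h : HasFDerivAt (fun y => (f y).re) (Complex.reCLM.comp (fderiv ℝ f x)) x :=
    Complex.reCLM.hasFDerivAt.comp x hf.hasFDerivAt
  unfold pd pdC
  rw [h.fderiv]
  simp

/-- with parallel magnitude surfaces, Im{αβ} is a first
integral of the electric field lines and Re{αβ} of the magnetic ones. -/
theorem stmt17 (α β : V3 → ℂ) (rα rβ θα θβ : V3 → ℝ)
    (hα : ContDiff ℝ (⊤ : ℕ∞) α) (hβ : ContDiff ℝ (⊤ : ℕ∞) β)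
    (hrα : ContDiff ℝ (⊤ : ℕ∞) rα) (hrβ : ContDiff ℝ (⊤ : ℕ∞) rβ)
    (hθα : ContDiff ℝ (⊤ : ℕ∞) θα) (hθβ : ContDiff ℝ (⊤ : ℕ∞) θβ)
    (hrαpos : ∀ x, 0 < rα x) (hrβpos : ∀ x, 0 < rβ x)
    (hpolα : ∀ x, α x = (rα x : ℂ) * Complex.exp (Complex.I * (θα x : ℂ)))
    (hpolβ : ∀ x, β x = (rβ x : ℂ) * Complex.exp (Complex.I * (θβ x : ℂ)))
    (E B : V3 → V3)
    (hEdef : ∀ x i, E x i = (ccross3 (gradC α x) (gradC β x) i).re)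
    (hBdef : ∀ x i, B x i = (ccross3 (gradC α x) (gradC β x) i).im)
    (hpar : ∀ x, cross3 (grad3 rα x) (grad3 rβ x) = 0) :
    ∀ x : V3,
      dot3 (E x) (grad3 (fun y => (α y * β y).im) x) = 0 ∧
      dot3 (B x) (grad3 (fun y => (α y * β y).re) x) = 0 := by
  intro x
  have hdα : Differentiable ℝ α := hα.differentiable (by simp)
  have hdβ : Differentiable ℝ β := hβ.differentiable (by simp)
  have hdrα : Differentiable ℝ rα := hrα.differentiable (by simp)
  have hdrβ : Differentiable ℝ rβ := hrβ.differentiable (by simp)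
  have hdθα : Differentiable ℝ θα := hθα.differentiable (by simp)
  have hdθβ : Differentiable ℝ θβ := hθβ.differentiable (by simp)
  have hαe : α = fun y => (rα y : ℂ) * Complex.exp (Complex.I * θα y) := funext hpolα
  have hβe : β = fun y => (rβ y : ℂ) * Complex.exp (Complex.I * θβ y) := funext hpolβ
  have hgα : ∀ i, pdC i α x
      = ((pd i rα x : ℂ) + Complex.I * rα x * pd i θα x) * Complex.exp (Complex.I * θα x) := by
    intro i; rw [hαe]; exact pdC_polar rα θα hdrα hdθα x i
  have hgβ : ∀ i, pdC i β x
      = ((pd i rβ x : ℂ) + Complex.I * rβ x * pd i θβ x) * Complex.exp (Complex.I * θβ x) := by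
    intro i; rw [hβe]; exact pdC_polar rβ θβ hdrβ hdθβ x i
  have hdαβ : DifferentiableAt ℝ (fun y => α y * β y) x := (hdα x).mul (hdβ x)
  have hmul : ∀ i, pdC i (fun y => α y * β y) x = pdC i α x * β x + α x * pdC i β x :=
    fun i => pdC_mul α β x (hdα x) (hdβ x) i
  have h0 : pd 1 rα x * pd 2 rβ x - pd 2 rα x * pd 1 rβ x = 0 := by
    have := congrFun (hpar x) 0; simpa [cross3, grad3] using this
  have h1 : pd 2 rα x * pd 0 rβ x - pd 0 rα x * pd 2 rβ x = 0 := by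
    have := congrFun (hpar x) 1; simpa [cross3, grad3] using this
  have h2 : pd 0 rα x * pd 1 rβ x - pd 1 rα x * pd 0 rβ x = 0 := by
    have := congrFun (hpar x) 2; simpa [cross3, grad3] using this
  constructor
  · have hGi : ∀ i, grad3 (fun y => (α y * β y).im) x i
        = (pdC i α x * β x + α x * pdC i β x).im := by
      intro i
      show pd i (fun y => (α y * β y).im) x = _
      rw [pd_im _ _ hdαβ i]
      exact congrArg Complex.im (hmul i)
    simp only [dot3]
    rw [hEdef x 0, hEdef x 1, hEdef x 2, hGi 0, hGi 1, hGi 2]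
    simp only [ccross3, gradC, Matrix.cons_val_zero, Matrix.cons_val_one, Matrix.head_cons,
      Matrix.cons_val_two, Matrix.tail_cons]
    rw [hgα 0, hgα 1, hgα 2, hgβ 0, hgβ 1, hgβ 2, hpolα x, hpolβ x]
    simp only [Complex.add_re, Complex.add_im, Complex.mul_re, Complex.mul_im,
      Complex.sub_re, Complex.sub_im, Complex.ofReal_re, Complex.ofReal_im,
      Complex.I_re, Complex.I_im, zero_mul, mul_zero, one_mul, mul_one, zero_add,
      add_zero, zero_sub, sub_zero, neg_mul, mul_neg, neg_neg]
    linear_combination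
      ((((Complex.exp (Complex.I * (θα x:ℂ))).re)^2 + ((Complex.exp (Complex.I * (θα x:ℂ))).im)^2)
        * (((Complex.exp (Complex.I * (θβ x:ℂ))).re)^2 + ((Complex.exp (Complex.I * (θβ x:ℂ))).im)^2)
        * rα x * rβ x) *
      ((pd 0 θα x + pd 0 θβ x) * h0 + (pd 1 θα x + pd 1 θβ x) * h1 + (pd 2 θα x + pd 2 θβ x) * h2)
  · have hGi : ∀ i, grad3 (fun y => (α y * β y).re) x i
        = (pdC i α x * β x + α x * pdC i β x).re := by
      intro i
      show pd i (fun y => (α y * β y).re) x = _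
      rw [pd_re _ _ hdαβ i]
      exact congrArg Complex.re (hmul i)
    simp only [dot3]
    rw [hBdef x 0, hBdef x 1, hBdef x 2, hGi 0, hGi 1, hGi 2]
    simp only [ccross3, gradC, Matrix.cons_val_zero, Matrix.cons_val_one, Matrix.head_cons,
      Matrix.cons_val_two, Matrix.tail_cons]
    rw [hgα 0, hgα 1, hgα 2, hgβ 0, hgβ 1, hgβ 2, hpolα x, hpolβ x]
    simp only [Complex.add_re, Complex.add_im, Complex.mul_re, Complex.mul_im,
      Complex.sub_re, Complex.sub_im, Complex.ofReal_re, Complex.ofReal_im,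
      Complex.I_re, Complex.I_im, zero_mul, mul_zero, one_mul, mul_one, zero_add,
      add_zero, zero_sub, sub_zero, neg_mul, mul_neg, neg_neg]
    linear_combination
      (-(((Complex.exp (Complex.I * (θα x:ℂ))).re)^2 + ((Complex.exp (Complex.I * (θα x:ℂ))).im)^2)
        * (((Complex.exp (Complex.I * (θβ x:ℂ))).re)^2 + ((Complex.exp (Complex.I * (θβ x:ℂ))).im)^2)
        * rα x * rβ x) *
      ((pd 0 θα x + pd 0 θβ x) * h0 + (pd 1 θα x + pd 1 θβ x) * h1 + (pd 2 θα x + pd 2 θβ x) * h2)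
end
end
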